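/- arXiv:2209.11627 — 2 statements merged into one kernel-verified Lean document; each statement's English description precedes it below -/
import Mathlib

section
/- If X is a resolving subcategory of A-mod, then for every natural number n the full subcategory X^{≤n} of modules with X-resolution dimension at most n is also a resolving subcategory of A-mod, and so is the subcategory X^{<∞} of modules with finite X-resolution dimension. -/
open CategoryTheory

section Core

variable (A : Type) [Ring A]

/-- A short exact sequence of `A`-modules, given by two composable morphisms. -/
def IsSES {X Y Z : ModuleCat A} (f : X ⟶ Y) (g : Y ⟶ Z) : Prop :=
  Function.Injective f ∧ Function.Exact f g ∧ Function.Surjective g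

/-- The class of finitely generated projective `A`-modules. -/
def projClass : Set (ModuleCat A) :=
  {M | Module.Finite A M ∧ Module.Projective A M}

/-- A resolving subcategory of the category of finitely generated `A`-modules:
it consists of finitely generated modules, contains all finitely generated projective modules,
and is closed under isomorphisms, extensions and kernels of epimorphisms. -/
structure IsResolving (C : Set (ModuleCat A)) : Prop where
  fg : ∀ M ∈ C, Module.Finite A M
  proj_mem : ∀ M : ModuleCat A, Module.Finite A M → Module.Projective A M → M ∈ C
  iso_closed : ∀ M N : ModuleCat A, Nonempty (M ≅ N) → M ∈ C → N ∈ C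
  ext_closed : ∀ (X Y Z : ModuleCat A) (f : X ⟶ Y) (g : Y ⟶ Z),
      IsSES A f g → X ∈ C → Z ∈ C → Y ∈ C
  ker_closed : ∀ (X Y Z : ModuleCat A) (f : X ⟶ Y) (g : Y ⟶ Z),
      IsSES A f g → Y ∈ C → Z ∈ C → X ∈ C

/-- A `C`-resolution `⋯ → X 1 → X 0 → M → 0` of `M`:
an exact sequence with all terms in `C`. -/
structure Resolution (C : Set (ModuleCat A)) (M : ModuleCat A) where
  X : ℕ → ModuleCat A
  mem : ∀ i, X i ∈ C
  d : ∀ i, X (i + 1) ⟶ X i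
  ε : X 0 ⟶ M
  surj : Function.Surjective ε
  exact_zero : Function.Exact (d 0) ε
  exact_succ : ∀ i, Function.Exact (d (i + 1)) (d i)

/-- The `n`-th syzygy of `M` with respect to a given resolution:
`syzygy 0 = M` and `syzygy (n+1) = Im (d n) = Ker (X n → X (n-1))`. -/
def Resolution.syzygy {C : Set (ModuleCat A)} {M : ModuleCat A}
    (r : Resolution A C M) : ℕ → ModuleCat A
  | 0 => M
  | n + 1 => ModuleCat.of A (LinearMap.range (r.d n).hom)

/-- `M` has `C`-resolution dimension at most `n`: there is a `C`-resolution of `M`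
which vanishes in degrees `> n`. -/
def resDimLE (C : Set (ModuleCat A)) (M : ModuleCat A) (n : ℕ) : Prop :=
  ∃ r : Resolution A C M, ∀ i, n < i → Limits.IsZero (r.X i)

/-- `Ext_A^j(M, N) = 0` for all `j ≥ k` (with `k ≥ 1`), expressed via the vanishing of the
cohomology of `Hom(P_•, N)` for every projective resolution `P_•` of `M`. -/
def extVanishFrom (M N : ModuleCat A) (k : ℕ) : Prop :=
  ∀ r : Resolution A (projClass A) M, ∀ i : ℕ, k ≤ i + 1 →
    Function.Exact (fun g : r.X i ⟶ N => r.d i ≫ g)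
      (fun g : r.X (i + 1) ⟶ N => r.d (i + 1) ≫ g)

/-- `Ext_A^j(M, N) = 0` for all `j ≥ 1`. -/
def extVanish (M N : ModuleCat A) : Prop := extVanishFrom A M N 1

/-- `Ext_A^1(M, N) = 0`. -/
def ext1Vanish (M N : ModuleCat A) : Prop :=
  ∀ r : Resolution A (projClass A) M,
    Function.Exact (fun g : r.X 0 ⟶ N => r.d 0 ≫ g)
      (fun g : r.X 1 ⟶ N => r.d 1 ≫ g)

/-- `add T`: direct summands of finite direct sums of copies of `T`. -/
def addClass (T : ModuleCat A) : Set (ModuleCat A) :=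
  {M | ∃ (n : ℕ) (s : M ⟶ ModuleCat.of A (Fin n → T))
        (p : ModuleCat.of A (Fin n → T) ⟶ M), s ≫ p = 𝟙 M}

/-- A `D`-coresolution `0 → M → X 0 → X 1 → ⋯` of `M`. -/
structure Coresolution (D : Set (ModuleCat A)) (M : ModuleCat A) where
  X : ℕ → ModuleCat A
  mem : ∀ i, X i ∈ D
  η : M ⟶ X 0
  d : ∀ i, X i ⟶ X (i + 1)
  inj : Function.Injective η
  exact_zero : Function.Exact η (d 0)
  exact_succ : ∀ i, Function.Exact (d i) (d (i + 1))

/-- The coresolution stays exact after applying `Hom_A(-, T)`. -/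
def Coresolution.HomExact {D : Set (ModuleCat A)} {M : ModuleCat A}
    (c : Coresolution A D M) (T : ModuleCat A) : Prop :=
  Function.Surjective (fun g : c.X 0 ⟶ T => c.η ≫ g) ∧
  Function.Exact (fun g : c.X 1 ⟶ T => c.d 0 ≫ g) (fun g : c.X 0 ⟶ T => c.η ≫ g) ∧
  ∀ i, Function.Exact (fun g : c.X (i + 1 + 1) ⟶ T => c.d (i + 1) ≫ g)
        (fun g : c.X (i + 1) ⟶ T => c.d i ≫ g)

/-- `cogen*(T)`: modules admitting an `add T`-coresolution which stays exact
under `Hom_A(-, T)`. -/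
def cogenStar (T : ModuleCat A) : Set (ModuleCat A) :=
  {M | ∃ c : Coresolution A (addClass A T) M, c.HomExact A T}

/-- `W(T) = ^⊥T ∩ cogen*(T)`. -/
def WClass (T : ModuleCat A) : Set (ModuleCat A) :=
  {M | extVanish A M T ∧ M ∈ cogenStar A T}

/-- `T` is a Wakamatsu tilting `A`-module. -/
def IsWakamatsuTilting (T : ModuleCat A) : Prop :=
  Module.Finite A T ∧ (ModuleCat.of A A) ∈ WClass A T ∧ T ∈ WClass A T

/-- A complete projective resolution (totally acyclic complex of finitely generated
projective modules). -/
structure TotallyAcyclic where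
  P : ℤ → ModuleCat A
  fg : ∀ i, Module.Finite A (P i)
  proj : ∀ i, Module.Projective A (P i)
  d : ∀ i, P i ⟶ P (i + 1)
  exact : ∀ i, Function.Exact (d i) (d (i + 1))
  homExact : ∀ i, Function.Exact
      (fun g : P (i + 1 + 1) ⟶ ModuleCat.of A A => d (i + 1) ≫ g)
      (fun g : P (i + 1) ⟶ ModuleCat.of A A => d i ≫ g)

/-- `M` is Gorenstein-projective: `M` is an image in a totally acyclic complex of
projectives. -/
def GorensteinProj (M : ModuleCat A) : Prop :=
  ∃ (c : TotallyAcyclic A) (i : ℤ),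
    Nonempty (M ≅ ModuleCat.of A (LinearMap.range (c.d i).hom))

/-- The class of finitely generated Gorenstein-projective modules. -/
def GPclass : Set (ModuleCat A) := {M | GorensteinProj A M}

/-- Gorenstein-projective dimension at most `n`. -/
def GPdimLE (M : ModuleCat A) (n : ℕ) : Prop := resDimLE A (GPclass A) M n

/-- The class of semi-Gorenstein-projective modules: finitely generated `M` with
`Ext^i(M, A) = 0` for all `i ≥ 1`. -/
def SGPclass : Set (ModuleCat A) :=
  {M | Module.Finite A M ∧ extVanish A M (ModuleCat.of A A)}

/-- `T` is a tilting module of projective dimension at most `ℓ`. -/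
def IsTiltingOfDim (T : ModuleCat A) (ℓ : ℕ) : Prop :=
  Module.Finite A T ∧ resDimLE A (projClass A) T ℓ ∧ extVanish A T T ∧
  ∃ c : Coresolution A (addClass A T) (ModuleCat.of A A),
    ∀ i, ℓ < i → Limits.IsZero (c.X i)

end Core

/-!
A module has `C`-resolution dimension at most `n + 1` exactly when it is a quotient of an object
of `C` by a submodule of `C`-resolution dimension at most `n`. So, by induction, it suffices to
show that for a resolving class `D ⊇ C` the quotients of objects of `C` by submodules in `D` again
form a resolving class. By Schanuel's lemma the kernel of *every* epimorphism from an object of `C`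
onto such a quotient lies in `D`; closure under extensions then follows from the horseshoe lemma,
and closure under kernels of epimorphisms by factoring through the kernel of a composite
epimorphism. Finite resolution dimension is the increasing union over `n`.
-/

open Function

section Development

variable {A : Type} [Ring A]

lemma IsSES.nonempty_iso_ker {X Y Z : ModuleCat A} {f : X ⟶ Y} {g : Y ⟶ Z} (h : IsSES A f g) :
    Nonempty (X ≅ ModuleCat.of A (LinearMap.ker g.hom)) :=
  ⟨((LinearEquiv.ofInjective f.hom h.1).trans
    (LinearEquiv.ofEq _ _ (LinearMap.exact_iff.mp h.2.1).symm)).toModuleIso⟩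

lemma isSES_subtype_ker {Y Z : ModuleCat A} (g : Y ⟶ Z) (hg : Surjective g) :
    IsSES A (ModuleCat.ofHom (LinearMap.ker g.hom).subtype) g :=
  ⟨Subtype.coe_injective, LinearMap.exact_subtype_ker_map g.hom, hg⟩

lemma exists_isSES_ker_comp {G Y Z : ModuleCat A} (p : G ⟶ Y) (q : Y ⟶ Z) (hp : Surjective p) :
    ∃ (i : ModuleCat.of A (LinearMap.ker p.hom) ⟶ ModuleCat.of A (LinearMap.ker (p ≫ q).hom))
      (r : ModuleCat.of A (LinearMap.ker (p ≫ q).hom) ⟶ ModuleCat.of A (LinearMap.ker q.hom)),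
      IsSES A i r := by
  have hle : LinearMap.ker p.hom ≤ LinearMap.ker (p ≫ q).hom := LinearMap.ker_le_ker_comp _ _
  refine ⟨ModuleCat.ofHom (Submodule.inclusion hle),
    ModuleCat.ofHom (p.hom.restrict fun x hx => hx), Submodule.inclusion_injective hle, ?_, ?_⟩
  · rintro ⟨x, hx⟩
    constructor
    · intro h0
      exact ⟨⟨x, congrArg Subtype.val h0⟩, rfl⟩
    · rintro ⟨⟨x', hx'⟩, h⟩
      cases h
      exact Subtype.ext hx'
  · rintro ⟨y, hy⟩
    obtain ⟨x, rfl⟩ := hp y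
    exact ⟨⟨x, hy⟩, rfl⟩

lemma exists_isSES_pullback {Y Q Z : ModuleCat A} (g₁ : Y ⟶ Z) (g₂ : Q ⟶ Z)
    (hg₁ : Surjective g₁) (hg₂ : Surjective g₂) :
    ∃ (E : ModuleCat A) (π₁ : E ⟶ Y) (π₂ : E ⟶ Q)
      (k₁ : ModuleCat.of A (LinearMap.ker g₂.hom) ⟶ E)
      (k₂ : ModuleCat.of A (LinearMap.ker g₁.hom) ⟶ E),
      IsSES A k₁ π₁ ∧ IsSES A k₂ π₂ := by
  set E := LinearMap.ker (g₁.hom ∘ₗ LinearMap.fst A Y Q - g₂.hom ∘ₗ LinearMap.snd A Y Q)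
  have hmem : ∀ y q, (y, q) ∈ E ↔ g₁ y = g₂ q := fun _ _ => sub_eq_zero
  refine ⟨ModuleCat.of A E, ModuleCat.ofHom (LinearMap.fst A Y Q ∘ₗ E.subtype),
    ModuleCat.ofHom (LinearMap.snd A Y Q ∘ₗ E.subtype),
    ModuleCat.ofHom (LinearMap.codRestrict E (LinearMap.inr A Y Q ∘ₗ (LinearMap.ker g₂.hom).subtype)
      fun q => (hmem 0 q).2 (by simp)),
    ModuleCat.ofHom (LinearMap.codRestrict E (LinearMap.inl A Y Q ∘ₗ (LinearMap.ker g₁.hom).subtype)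
      fun y => (hmem y 0).2 (by simp)),
    ⟨fun a b h => Subtype.ext (congrArg (fun e : E => e.1.2) h), ?_, ?_⟩,
    ⟨fun a b h => Subtype.ext (congrArg (fun e : E => e.1.1) h), ?_, ?_⟩⟩
  · rintro ⟨⟨y, q⟩, he⟩
    constructor
    · intro (hy : y = 0)
      subst hy
      exact ⟨⟨q, by simpa using ((hmem 0 q).1 he).symm⟩, rfl⟩
    · rintro ⟨q, h⟩
      cases h
      rfl
  · intro y
    obtain ⟨q, hq⟩ := hg₂ (g₁ y)
    exact ⟨⟨(y, q), (hmem y q).2 hq.symm⟩, rfl⟩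
  · rintro ⟨⟨y, q⟩, he⟩
    constructor
    · intro (hq : q = 0)
      subst hq
      exact ⟨⟨y, by simpa using (hmem y 0).1 he⟩, rfl⟩
    · rintro ⟨y, h⟩
      cases h
      rfl
  · intro q
    obtain ⟨y, hy⟩ := hg₁ (g₂ q)
    exact ⟨⟨(y, q), (hmem y q).2 hy⟩, rfl⟩

lemma exists_isSES_horseshoe {X Y Z P Q : ModuleCat A} {f : X ⟶ Y} {g : Y ⟶ Z}
    (hfg : IsSES A f g) {πX : P ⟶ X} {πZ : Q ⟶ Z} (hπX : Surjective πX) (hπZ : Surjective πZ)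
    [Module.Projective A Q] :
    ∃ (π : ModuleCat.of A (P × Q) ⟶ Y)
      (i : ModuleCat.of A (LinearMap.ker πX.hom) ⟶ ModuleCat.of A (LinearMap.ker π.hom))
      (r : ModuleCat.of A (LinearMap.ker π.hom) ⟶ ModuleCat.of A (LinearMap.ker πZ.hom)),
      Surjective π ∧ IsSES A i r := by
  obtain ⟨h, hh⟩ := Module.projective_lifting_property g.hom πZ.hom hfg.2.2
  have hgh : ∀ b, g (h b) = πZ b := LinearMap.congr_fun hh
  have hgf : ∀ x, g (f x) = 0 := fun x => (hfg.2.1 _).2 ⟨x, rfl⟩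
  set π := (f.hom ∘ₗ πX.hom).coprod h
  have hπ : ∀ a b, π (a, b) = f (πX a) + h b := fun _ _ => rfl
  have hinl : ∀ a : LinearMap.ker πX.hom, ((a : P), (0 : Q)) ∈ LinearMap.ker π := fun a => by
    simp [hπ, LinearMap.mem_ker.1 a.2]
  have hsnd : ∀ e ∈ LinearMap.ker π, e.2 ∈ LinearMap.ker πZ.hom := fun e he => by
    have : h e.2 = -f (πX e.1) := eq_neg_of_add_eq_zero_right (by rw [← hπ]; exact he)
    rw [LinearMap.mem_ker, ← hgh, this, map_neg, hgf, neg_zero]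
  refine ⟨ModuleCat.ofHom π, ModuleCat.ofHom (LinearMap.codRestrict _
      (LinearMap.inl A P Q ∘ₗ (LinearMap.ker πX.hom).subtype) hinl),
    ModuleCat.ofHom ((LinearMap.snd A P Q).restrict hsnd), ?_,
    fun a b hab => Subtype.ext (congrArg (fun e : LinearMap.ker π => e.1.1) hab), ?_, ?_⟩
  · intro y
    obtain ⟨b, hb⟩ := hπZ (g y)
    obtain ⟨x, hx⟩ := (hfg.2.1 (y - h b)).1 (by rw [map_sub, hgh, hb, sub_self])
    obtain ⟨a, rfl⟩ := hπX x
    exact ⟨(a, b), show π (a, b) = y by simp [hπ, hx]⟩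
  · rintro ⟨⟨a, b⟩, he⟩
    constructor
    · intro hb
      obtain rfl : b = 0 := congrArg Subtype.val hb
      have ha : πX a = 0 := hfg.1 (by simpa [hπ] using he)
      exact ⟨⟨a, ha⟩, rfl⟩
    · rintro ⟨a, h⟩
      cases h
      rfl
  · rintro ⟨b, hb⟩
    obtain ⟨x, hx⟩ := (hfg.2.1 (h b)).1 (by rw [hgh]; exact hb)
    obtain ⟨a, ha⟩ := hπX (-x)
    exact ⟨⟨(a, b), by simp [hπ, ha, hx]⟩, rfl⟩

namespace IsResolving

variable {C D : Set (ModuleCat A)}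

lemma zero_mem (hC : IsResolving A C) : ModuleCat.of A PUnit ∈ C :=
  hC.proj_mem _ inferInstance inferInstance

lemma exists_projective_surjection (hC : IsResolving A C) (M : ModuleCat A)
    [Module.Finite A M] :
    ∃ (P : ModuleCat A) (π : P ⟶ M), P ∈ C ∧ Module.Projective A P ∧ Surjective π := by
  obtain ⟨k, φ, hφ⟩ := Module.Finite.exists_fin' A M
  exact ⟨ModuleCat.of A (ULift (Fin k → A)), ModuleCat.ofHom (φ ∘ₗ ULift.moduleEquiv.toLinearMap),
    hC.proj_mem _ inferInstance inferInstance, inferInstance, hφ.comp ULift.moduleEquiv.surjective⟩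

lemma ker_mem_iff (hD : IsResolving A D) {X Y Z : ModuleCat A} {f : X ⟶ Y} {g : Y ⟶ Z}
    (h : IsSES A f g) : ModuleCat.of A (LinearMap.ker g.hom) ∈ D ↔ X ∈ D :=
  let ⟨e⟩ := h.nonempty_iso_ker
  ⟨hD.iso_closed _ _ ⟨e.symm⟩, hD.iso_closed _ _ ⟨e⟩⟩

lemma ker_mem (hD : IsResolving A D) {Y Z : ModuleCat A} {g : Y ⟶ Z} (hg : Surjective g)
    (hY : Y ∈ D) (hZ : Z ∈ D) : ModuleCat.of A (LinearMap.ker g.hom) ∈ D :=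
  hD.ker_closed _ _ _ _ g (isSES_subtype_ker g hg) hY hZ

end IsResolving

def quotClass (C D : Set (ModuleCat A)) : Set (ModuleCat A) :=
  {M | ∃ (G : ModuleCat A) (p : G ⟶ M),
    G ∈ C ∧ Surjective p ∧ ModuleCat.of A (LinearMap.ker p.hom) ∈ D}

namespace IsResolving

variable {C D : Set (ModuleCat A)}

lemma subset_quotClass (hC : IsResolving A C) (hD : IsResolving A D) : D ⊆ quotClass C D := by
  intro M hM
  have := hD.fg M hM
  obtain ⟨P, π, hP, _, hπ⟩ := hC.exists_projective_surjection M
  have := hC.fg P hP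
  exact ⟨P, π, hP, hπ, hD.ker_mem hπ (hD.proj_mem P inferInstance inferInstance) hM⟩

lemma fg_of_mem_quotClass (hC : IsResolving A C) {M : ModuleCat A} (hM : M ∈ quotClass C D) :
    Module.Finite A M :=
  let ⟨G, p, hG, hp, _⟩ := hM
  have := hC.fg G hG
  Module.Finite.of_surjective p.hom hp

lemma quotClass_iso_closed (hD : IsResolving A D) {M N : ModuleCat A} (e : M ≅ N)
    (hM : M ∈ quotClass C D) : N ∈ quotClass C D := by
  obtain ⟨G, p, hG, hp, hK⟩ := hM
  have hker : LinearMap.ker (p ≫ e.hom).hom = LinearMap.ker p.hom :=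
    LinearMap.ker_comp_of_ker_eq_bot _ (LinearMap.ker_eq_bot.2 e.toLinearEquiv.injective)
  exact ⟨G, p ≫ e.hom, hG, e.toLinearEquiv.surjective.comp hp,
    hD.iso_closed _ _ ⟨(LinearEquiv.ofEq _ _ hker.symm).toModuleIso⟩ hK⟩

/-- Schanuel's lemma, through the pullback of two presentations. -/
lemma ker_mem_of_mem_quotClass (hD : IsResolving A D) (hCD : C ⊆ D) {M G : ModuleCat A}
    (hM : M ∈ quotClass C D) (hG : G ∈ C) {p : G ⟶ M} (hp : Surjective p) :
    ModuleCat.of A (LinearMap.ker p.hom) ∈ D := by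
  obtain ⟨G', p', hG', hp', hK'⟩ := hM
  obtain ⟨E, π₁, π₂, k₁, k₂, h₁, h₂⟩ := exists_isSES_pullback p p' hp hp'
  have hE : E ∈ D := hD.ext_closed _ _ _ k₁ π₁ h₁ hK' (hCD hG)
  exact hD.ker_closed _ _ _ k₂ π₂ h₂ hE (hCD hG')

lemma quotClass_ext_closed (hC : IsResolving A C) (hD : IsResolving A D) (hCD : C ⊆ D)
    {X Y Z : ModuleCat A} {f : X ⟶ Y} {g : Y ⟶ Z} (hfg : IsSES A f g)
    (hX : X ∈ quotClass C D) (hZ : Z ∈ quotClass C D) : Y ∈ quotClass C D := by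
  have := hC.fg_of_mem_quotClass hX
  have := hC.fg_of_mem_quotClass hZ
  obtain ⟨P, πX, hP, _, hπX⟩ := hC.exists_projective_surjection X
  obtain ⟨Q, πZ, hQ, _, hπZ⟩ := hC.exists_projective_surjection Z
  obtain ⟨π, i, r, hπ, hir⟩ := exists_isSES_horseshoe hfg hπX hπZ
  have := hC.fg P hP
  have := hC.fg Q hQ
  exact ⟨_, π, hC.proj_mem _ inferInstance inferInstance, hπ,
    hD.ext_closed _ _ _ i r hir (hD.ker_mem_of_mem_quotClass hCD hX hP hπX)
      (hD.ker_mem_of_mem_quotClass hCD hZ hQ hπZ)⟩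

lemma mem_quotClass_of_surjective (hD : IsResolving A D) {E X : ModuleCat A}
    (hE : E ∈ quotClass C D) {s : E ⟶ X} (hs : Surjective s)
    (hK : ModuleCat.of A (LinearMap.ker s.hom) ∈ D) : X ∈ quotClass C D := by
  obtain ⟨G, p, hG, hp, hKp⟩ := hE
  obtain ⟨i, q, hiq⟩ := exists_isSES_ker_comp p s hp
  exact ⟨G, p ≫ s, hG, hs.comp hp, hD.ext_closed _ _ _ i q hiq hKp hK⟩

lemma quotClass_ker_closed (hC : IsResolving A C) (hD : IsResolving A D) (hCD : C ⊆ D)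
    {X Y Z : ModuleCat A} {f : X ⟶ Y} {g : Y ⟶ Z} (hfg : IsSES A f g)
    (hY : Y ∈ quotClass C D) (hZ : Z ∈ quotClass C D) : X ∈ quotClass C D := by
  obtain ⟨G, p, hG, hp, hKp⟩ := hY
  have hV := hD.ker_mem_of_mem_quotClass hCD hZ hG (p := p ≫ g) (hfg.2.2.comp hp)
  obtain ⟨i, q, hiq⟩ := exists_isSES_ker_comp p g hp
  obtain ⟨e⟩ := hfg.nonempty_iso_ker
  exact hD.quotClass_iso_closed e.symm <| hD.mem_quotClass_of_surjective
    (hC.subset_quotClass hD hV) hiq.2.2 ((hD.ker_mem_iff hiq).2 hKp)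

lemma quotClass (hC : IsResolving A C) (hD : IsResolving A D) (hCD : C ⊆ D) :
    IsResolving A (quotClass C D) where
  fg _ := hC.fg_of_mem_quotClass
  proj_mem M h₁ h₂ := hC.subset_quotClass hD (hD.proj_mem M h₁ h₂)
  iso_closed _ _ := fun ⟨e⟩ => hD.quotClass_iso_closed e
  ext_closed _ _ _ _ _ := hC.quotClass_ext_closed hD hCD
  ker_closed _ _ _ _ _ := hC.quotClass_ker_closed hD hCD

end IsResolving

namespace Resolution

variable {C : Set (ModuleCat A)} {M : ModuleCat A}

def shift (r : Resolution A C M) : Resolution A C (ModuleCat.of A (LinearMap.ker r.ε.hom)) where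
  X i := r.X (i + 1)
  mem i := r.mem (i + 1)
  d i := r.d (i + 1)
  ε := ModuleCat.ofHom <| (r.d 0).hom.codRestrict _ fun x => (r.exact_zero _).2 ⟨x, rfl⟩
  surj := fun ⟨y, hy⟩ =>
    let ⟨x, hx⟩ := (r.exact_zero y).1 hy
    ⟨x, Subtype.ext hx⟩
  exact_zero y := Subtype.ext_iff.trans (r.exact_succ 0 y)
  exact_succ i := r.exact_succ (i + 1)

def cons {G : ModuleCat A} (hG : G ∈ C) (p : G ⟶ M) (hp : Surjective p)
    (r : Resolution A C (ModuleCat.of A (LinearMap.ker p.hom))) : Resolution A C M where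
  X | 0 => G | i + 1 => r.X i
  mem | 0 => hG | i + 1 => r.mem i
  d | 0 => r.ε ≫ ModuleCat.ofHom (LinearMap.ker p.hom).subtype | i + 1 => r.d i
  ε := p
  surj := hp
  exact_zero y := ⟨fun hy => let ⟨x, hx⟩ := r.surj ⟨y, hy⟩; ⟨x, congrArg Subtype.val hx⟩,
    fun ⟨x, hx⟩ => hx ▸ (r.ε x).2⟩
  exact_succ
    | 0 => fun y => Submodule.coe_eq_zero.trans (r.exact_zero y)
    | i + 1 => r.exact_succ i

def ofMem {Z : ModuleCat A} (hZ : Limits.IsZero Z) (h0 : Z ∈ C) (hM : M ∈ C) :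
    Resolution A C M where
  X | 0 => M | _ + 1 => Z
  mem | 0 => hM | _ + 1 => h0
  d _ := 0
  ε := 𝟙 M
  surj := surjective_id
  exact_zero := (LinearMap.exact_zero_iff_injective _ _).2 injective_id
  exact_succ _ _ := ⟨fun _ => ⟨0, (ModuleCat.subsingleton_of_isZero hZ).elim _ _⟩, fun _ => rfl⟩

end Resolution

variable {C : Set (ModuleCat A)}

lemma resDimLE_mono {M : ModuleCat A} {m n : ℕ} (h : resDimLE A C M m) (hmn : m ≤ n) :
    resDimLE A C M n :=
  let ⟨r, hr⟩ := h
  ⟨r, fun i hi => hr i (hmn.trans_lt hi)⟩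

lemma resDimLE_succ_iff {M : ModuleCat A} {n : ℕ} :
    resDimLE A C M (n + 1) ↔ M ∈ quotClass C {K | resDimLE A C K n} := by
  constructor
  · rintro ⟨r, hr⟩
    exact ⟨r.X 0, r.ε, r.mem 0, r.surj, r.shift, fun i hi => hr (i + 1) (by omega)⟩
  · rintro ⟨G, p, hG, hp, r, hr⟩
    refine ⟨Resolution.cons hG p hp r, ?_⟩
    rintro (_ | i) hi
    · omega
    · exact hr i (by omega)

namespace IsResolving

lemma resDimLE_of_mem (hC : IsResolving A C) {M : ModuleCat A} (hM : M ∈ C) (n : ℕ) :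
    resDimLE A C M n := by
  have hZ := ModuleCat.isZero_of_subsingleton (ModuleCat.of A PUnit)
  refine ⟨Resolution.ofMem hZ hC.zero_mem hM, ?_⟩
  rintro (_ | i) hi
  · omega
  · exact hZ

lemma mem_of_resDimLE_zero (hC : IsResolving A C) {M : ModuleCat A} (h : resDimLE A C M 0) :
    M ∈ C := by
  obtain ⟨r, hr⟩ := h
  have hinj : Injective r.ε := by
    refine (injective_iff_map_eq_zero _).2 fun x hx => ?_
    obtain ⟨y, rfl⟩ := (r.exact_zero x).1 hx
    rw [(hr 1 one_pos).eq_of_src (r.d 0) 0]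
    rfl
  exact hC.iso_closed _ _ ⟨(LinearEquiv.ofBijective r.ε.hom ⟨hinj, r.surj⟩).toModuleIso⟩ (r.mem 0)

lemma setOf_resDimLE (hC : IsResolving A C) (n : ℕ) : IsResolving A {M | resDimLE A C M n} := by
  induction n with
  | zero =>
    convert hC using 1
    exact Set.ext fun M => ⟨hC.mem_of_resDimLE_zero, fun hM => hC.resDimLE_of_mem hM 0⟩
  | succ n ih =>
    simp only [resDimLE_succ_iff, Set.ofPred_mem_eq]
    exact hC.quotClass ih fun M hM => hC.resDimLE_of_mem hM n

lemma iUnion {ι : Type*} [Nonempty ι] {S : ι → Set (ModuleCat A)} (hS : ∀ i, IsResolving A (S i))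
    (hdir : Directed (· ⊆ ·) S) : IsResolving A (⋃ i, S i) := by
  have hmem {M} : M ∈ ⋃ i, S i ↔ ∃ i, M ∈ S i := Set.mem_iUnion
  refine ⟨fun M hM => ?_, fun M h₁ h₂ => ?_, fun M N e hM => ?_, fun X Y Z f g h hX hZ => ?_,
    fun X Y Z f g h hY hZ => ?_⟩
  · obtain ⟨i, hi⟩ := hmem.1 hM
    exact (hS i).fg M hi
  · exact hmem.2 ⟨Classical.arbitrary ι, (hS _).proj_mem M h₁ h₂⟩
  · obtain ⟨i, hi⟩ := hmem.1 hM
    exact hmem.2 ⟨i, (hS i).iso_closed M N e hi⟩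
  · obtain ⟨i, hi⟩ := hmem.1 hX
    obtain ⟨j, hj⟩ := hmem.1 hZ
    obtain ⟨k, hik, hjk⟩ := hdir i j
    exact hmem.2 ⟨k, (hS k).ext_closed X Y Z f g h (hik hi) (hjk hj)⟩
  · obtain ⟨i, hi⟩ := hmem.1 hY
    obtain ⟨j, hj⟩ := hmem.1 hZ
    obtain ⟨k, hik, hjk⟩ := hdir i j
    exact hmem.2 ⟨k, (hS k).ker_closed X Y Z f g h (hik hi) (hjk hj)⟩

end IsResolving

end Development

theorem stmt1_general (A : Type) [Ring A]
    (C : Set (ModuleCat A)) (hC : IsResolving A C) (n : ℕ) :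
    IsResolving A {M | resDimLE A C M n} ∧
    IsResolving A {M | ∃ m : ℕ, resDimLE A C M m} := by
  refine ⟨hC.setOf_resDimLE n, ?_⟩
  rw [Set.ofPred_exists]
  exact IsResolving.iUnion hC.setOf_resDimLE
    (Monotone.directed_le fun _ _ hmn _ hM => resDimLE_mono hM hmn)

/-- If `C` is a resolving subcategory of `A`-mod, then for every natural
number `n` the subcategory `C^{≤n}` of modules of `C`-resolution dimension at most `n` is
again resolving, and so is the subcategory `C^{<∞}` of modules of finite `C`-resolution
dimension. -/
theorem stmt1 (A : Type) [Ring A] [IsArtinianRing A]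
    (C : Set (ModuleCat A)) (hC : IsResolving A C) (n : ℕ) :
    IsResolving A {M | resDimLE A C M n} ∧
    IsResolving A {M | ∃ m : ℕ, resDimLE A C M m} :=
  stmt1_general A C hC n
end

section
/- Let F : C → D and G : D → C be inverse resolving dualities between resolving subcategories C ⊆ A-mod and D ⊆ B^{op}-mod (contravariant, exact on the induced exact structures, with GF and FG naturally isomorphic to the identities). Then for every M in C and every i ≥ 1, Ext_A^i(M, G(B)) = 0; in particular C ⊆ ^⊥(G(B)). -/
open CategoryTheory

section Duality

open Opposite

variable (A : Type) [Ring A]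

/-- The full subcategory of `ModuleCat A` on a class of modules. -/
abbrev ResSub (C : Set (ModuleCat A)) := ObjectProperty.FullSubcategory (fun M : ModuleCat A => M ∈ C)

variable {A} {B : Type} [Ring B]

/-- A contravariant functor between fully exact subcategories is exact if it sends
(induced) short exact sequences to short exact sequences. -/
def PreservesSESContra {C : Set (ModuleCat A)} {D : Set (ModuleCat B)}
    (F : (ResSub A C)ᵒᵖ ⥤ ResSub B D) : Prop :=
  ∀ (X Y Z : ResSub A C) (f : X ⟶ Y) (g : Y ⟶ Z),
    IsSES A ((ObjectProperty.ι _).map f) ((ObjectProperty.ι _).map g) →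
    IsSES B ((ObjectProperty.ι _).map (F.map g.op))
      ((ObjectProperty.ι _).map (F.map f.op))

/-- Inverse resolving dualities between `C ⊆ A`-mod and `D ⊆ B`-mod:
`C`, `D` are resolving subcategories, `F`, `G` are contravariant additive functors which
are exact for the induced exact structures, and `G ∘ F ≅ Id`, `F ∘ G ≅ Id`. -/
structure ResolvingDuality (C : Set (ModuleCat A)) (D : Set (ModuleCat B)) where
  resC : IsResolving A C
  resD : IsResolving B D
  F : (ResSub A C)ᵒᵖ ⥤ ResSub B D
  G : (ResSub B D)ᵒᵖ ⥤ ResSub A C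
  Fadd : F.Additive
  Gadd : G.Additive
  Fexact : PreservesSESContra F
  Gexact : PreservesSESContra G
  GF : Nonempty (F.rightOp ⋙ G ≅ 𝟭 (ResSub A C))
  FG : Nonempty (G.rightOp ⋙ F ≅ 𝟭 (ResSub B D))

/-- The regular module, as an object of a resolving subcategory. -/
def regularObj {C : Set (ModuleCat A)} (h : IsResolving A C) : ResSub A C :=
  ⟨ModuleCat.of A A, h.proj_mem _ (Module.Finite.self A) (inferInstance : Module.Projective A A)⟩

end Duality

/-! Because `F (G B) ≅ B` is projective and `F` is exact, every map `Ω → G B` extends along a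
monomorphism `Ω → X` in `C` whose cokernel lies in `C`: apply `F`, lift against the projective
`F (G B)`, and come back with `G`, using `G ∘ F ≅ 𝟭`. All syzygies of a projective resolution of
`M ∈ C` lie in `C`, and for them this extension property is the exactness of `Hom(P_•, G B)` in
positive degrees. -/

open Opposite

lemma IsResolving.projClass_subset {A : Type} [Ring A] {C : Set (ModuleCat A)}
    (hC : IsResolving A C) : projClass A ⊆ C :=
  fun P hP => hC.proj_mem P hP.1 hP.2

namespace Resolution

variable {A : Type} [Ring A] {C : Set (ModuleCat A)} {M : ModuleCat A} (r : Resolution A C M)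

def toSyzygy : ∀ n, r.X n ⟶ r.syzygy A n
  | 0 => r.ε
  | n + 1 => ModuleCat.ofHom (r.d n).hom.rangeRestrict

def syzygyι (n : ℕ) : r.syzygy A (n + 1) ⟶ r.X n :=
  ModuleCat.ofHom (LinearMap.range (r.d n).hom).subtype

lemma toSyzygy_surjective : ∀ n, Function.Surjective (r.toSyzygy n)
  | 0 => r.surj
  | n + 1 => LinearMap.surjective_rangeRestrict (r.d n).hom

lemma toSyzygy_comp_syzygyι (n : ℕ) : r.toSyzygy (n + 1) ≫ r.syzygyι n = r.d n := rfl

lemma exact_d_toSyzygy (n : ℕ) : Function.Exact (r.d (n + 1)) (r.toSyzygy (n + 1)) := by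
  rw [LinearMap.exact_iff]
  exact (LinearMap.ker_rangeRestrict _).trans (LinearMap.exact_iff.mp (r.exact_succ n))

lemma isSES_syzygyι_toSyzygy : ∀ n, IsSES A (r.syzygyι n) (r.toSyzygy n)
  | 0 => ⟨Subtype.val_injective, by
      rw [LinearMap.exact_iff]
      exact (LinearMap.exact_iff.mp r.exact_zero).trans (Submodule.range_subtype _).symm,
      r.toSyzygy_surjective 0⟩
  | n + 1 => ⟨Subtype.val_injective, by
      rw [LinearMap.exact_iff]
      exact ((LinearMap.ker_rangeRestrict _).trans
        (LinearMap.exact_iff.mp (r.exact_succ n))).trans (Submodule.range_subtype _).symm,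
      r.toSyzygy_surjective (n + 1)⟩

lemma syzygy_mem {C' : Set (ModuleCat A)} (hC' : IsResolving A C') (hX : ∀ i, r.X i ∈ C')
    (hM : M ∈ C') : ∀ n, r.syzygy A n ∈ C'
  | 0 => hM
  | n + 1 => hC'.ker_closed _ _ _ _ _ (r.isSES_syzygyι_toSyzygy n) (hX n) (syzygy_mem hC' hX hM n)

lemma d_comp_d (n : ℕ) : r.d (n + 1) ≫ r.d n = 0 :=
  ModuleCat.hom_ext (r.exact_succ n).linearMap_comp_eq_zero

end Resolution

lemma ModuleCat.exists_comp_eq_of_exact {A : Type} [Ring A] {X Y Z N : ModuleCat A}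
    {f : X ⟶ Y} {g : Y ⟶ Z} (hfg : Function.Exact f g) (hg : Function.Surjective g)
    (h : Y ⟶ N) (hh : f ≫ h = 0) : ∃ h' : Z ⟶ N, g ≫ h' = h := by
  let S := ShortComplex.mk f g (ModuleCat.hom_ext hfg.linearMap_comp_eq_zero)
  have hS : S.Exact := (ShortComplex.ShortExact.moduleCat_exact_iff_function_exact S).mpr hfg
  have : Epi S.g := (ModuleCat.epi_iff_surjective g).mpr hg
  exact ⟨hS.desc h hh, hS.g_desc h hh⟩

lemma extVanish_of_forall_exists_comp_eq {A : Type} [Ring A] {C : Set (ModuleCat A)}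
    (hC : IsResolving A C) {M N : ModuleCat A} (hM : M ∈ C)
    (hN : ∀ {X Y Z : ModuleCat A}, X ∈ C → Y ∈ C → Z ∈ C → ∀ (f : X ⟶ Y) (g : Y ⟶ Z),
      IsSES A f g → ∀ h : X ⟶ N, ∃ k : Y ⟶ N, f ≫ k = h) :
    extVanish A M N := by
  intro r i _ h
  have hX : ∀ i, r.X i ∈ C := fun i => hC.projClass_subset (r.mem i)
  have hsyz := r.syzygy_mem hC hX hM
  constructor
  · intro hh
    obtain ⟨h', rfl⟩ := ModuleCat.exists_comp_eq_of_exact (r.exact_d_toSyzygy i)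
      (r.toSyzygy_surjective (i + 1)) h hh
    obtain ⟨k, hk⟩ := hN (hsyz (i + 1)) (hX i) (hsyz i) _ _ (r.isSES_syzygyι_toSyzygy i) h'
    exact ⟨k, show r.d i ≫ k = _ by rw [← r.toSyzygy_comp_syzygyι, Category.assoc, hk]⟩
  · rintro ⟨k, rfl⟩
    simp only [← Category.assoc, r.d_comp_d, Limits.zero_comp]

namespace ResolvingDuality

variable {A B : Type} [Ring A] [Ring B] {C : Set (ModuleCat A)} {D : Set (ModuleCat B)}
  (dl : ResolvingDuality C D)

lemma exists_comp_eq_of_projective {N X Y Z : ResSub A C}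
    (hN : Module.Projective B (dl.F.obj (op N)).obj) (f : X ⟶ Y) (g : Y ⟶ Z)
    (hfg : IsSES A f.hom g.hom) (h : X ⟶ N) : ∃ k : Y ⟶ N, f ≫ k = h := by
  obtain ⟨s, hs⟩ := Module.projective_lifting_property (dl.F.map f.op).hom.hom
    (dl.F.map h.op).hom.hom (dl.Fexact X Y Z f g hfg).2.2
  let s' : dl.F.obj (op N) ⟶ dl.F.obj (op Y) := InducedCategory.homMk (ModuleCat.ofHom s)
  have hs' : s' ≫ dl.F.map f.op = dl.F.map h.op :=
    InducedCategory.hom_ext (ModuleCat.hom_ext hs)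
  obtain ⟨e⟩ := dl.GF
  refine ⟨e.inv.app Y ≫ dl.G.map s'.op ≫ e.hom.app N, ?_⟩
  calc f ≫ e.inv.app Y ≫ dl.G.map s'.op ≫ e.hom.app N
      = e.inv.app X ≫ dl.G.map (s' ≫ dl.F.map f.op).op ≫ e.hom.app N := by
        rw [← Category.assoc f, ← Functor.id_map f, e.inv.naturality f, op_comp, Functor.map_comp]
        simp only [Functor.comp_map, Functor.rightOp_map, Functor.id_map, Category.assoc]
    _ = e.inv.app X ≫ (dl.F.rightOp ⋙ dl.G).map h ≫ e.hom.app N := by rw [hs']; rfl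
    _ = h := by rw [e.hom.naturality, Iso.inv_hom_id_app_assoc, Functor.id_map]

lemma projective_F_obj_G_obj (P : ResSub B D) [Module.Projective B P.obj] :
    Module.Projective B (dl.F.obj (op (dl.G.obj (op P)))).obj :=
  Module.Projective.of_equiv' (M := P.obj)
    ((ObjectProperty.ι _).mapIso (dl.FG.some.app P)).symm.toLinearEquiv

end ResolvingDuality

theorem stmt6_general (A B : Type) [Ring A] [Ring B]
    (C : Set (ModuleCat A)) (D : Set (ModuleCat Bᵐᵒᵖ))
    (dl : ResolvingDuality C D) :
    ∀ M : ModuleCat A, M ∈ C →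
      extVanish A M ((dl.G.obj (Opposite.op (regularObj dl.resD))).obj) := by
  intro M hM
  have : Module.Projective Bᵐᵒᵖ (regularObj dl.resD).obj :=
    inferInstanceAs (Module.Projective Bᵐᵒᵖ Bᵐᵒᵖ)
  refine extVanish_of_forall_exists_comp_eq dl.resC hM fun hX hY hZ f g hfg h => ?_
  obtain ⟨k, hk⟩ := dl.exists_comp_eq_of_projective (dl.projective_F_obj_G_obj _)
    (X := ⟨_, hX⟩) (Y := ⟨_, hY⟩) (Z := ⟨_, hZ⟩)
    (InducedCategory.homMk f) (InducedCategory.homMk g) hfg (InducedCategory.homMk h)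
  exact ⟨k.hom, congrArg InducedCategory.Hom.hom hk⟩

/-- Let `F : C → D` and `G : D → C` be inverse resolving dualities
between resolving subcategories `C ⊆ A`-mod and `D ⊆ B^{op}`-mod.  Then for every `M` in
`C` and every `i ≥ 1`, `Ext_A^i(M, G(B)) = 0`; in particular `C ⊆ ^⊥(G(B))`. -/
theorem stmt6 (A B : Type) [Ring A] [Ring B] [IsArtinianRing A] [IsArtinianRing B]
    (C : Set (ModuleCat A)) (D : Set (ModuleCat Bᵐᵒᵖ))
    (dl : ResolvingDuality C D) :
    ∀ M : ModuleCat A, M ∈ C →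
      extVanish A M ((dl.G.obj (Opposite.op (regularObj dl.resD))).obj) :=
  stmt6_general A B C D dl
end
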